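/- The group H(ℤ) is not finitely generated. -/

import Mathlib

/-!
If finitely many elements generated `H(ℤ)`, let `T` be the finite set of their break points;
each lies in a real quadratic field `ℚ(√m)`. A break point of a product or of an inverse is the
image under some element of `SL(2, ℤ)` of a break point of a factor, and subfields of `ℝ` are
stable under Möbius maps, so every element of the generated group breaks only inside
`⋃_{t ∈ T} ℚ(t)`. But for a prime `p` larger than all the `m`, a solution of Pell's equation
`x² - p y² = 1` gives a hyperbolic matrix fixing `±√p`; acting by it on `[-√p, √p]` and trivially
elsewhere defines an element of `H(ℤ)` that breaks at `√p ∉ ℚ(√m)`.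
-/

noncomputable section

abbrev SL2Z := Matrix.SpecialLinearGroup (Fin 2) ℤ

/-- The Möbius action of `A ∈ SL(2, ℤ)` on `x ∈ ℝ`. -/
def mobius (A : SL2Z) (x : ℝ) : ℝ :=
  ((A 0 0 : ℤ) * x + (A 0 1 : ℤ)) / ((A 1 0 : ℤ) * x + (A 1 1 : ℤ))

/-- The Möbius action of `A = !![a, b; c, d]` is defined at `x` if `c·x + d ≠ 0`. -/
def mobiusDefinedAt (A : SL2Z) (x : ℝ) : Prop :=
  ((A 1 0 : ℤ) : ℝ) * x + ((A 1 1 : ℤ) : ℝ) ≠ 0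

/-- `x` is a fixed point of `A = !![a, b; c, d]` if `a·x + b = x·(c·x + d)`. -/
def IsFixedPt (A : SL2Z) (x : ℝ) : Prop :=
  (A 0 0 : ℤ) * x + (A 0 1 : ℤ) = x * ((A 1 0 : ℤ) * x + (A 1 1 : ℤ))

/-- `A` is hyperbolic if `|a + d| > 2`. -/
def IsHyperbolic (A : SL2Z) : Prop := 2 < |A 0 0 + A 1 1|

/-- `P_ℤ` is the set of real fixed points of hyperbolic elements of SL(2, ℤ). -/
def PZ : Set ℝ := {x | ∃ A : SL2Z, IsHyperbolic A ∧ IsFixedPt A x}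

/-- A real number is a quadratic irrational if it is irrational and of the form
`u + v·√k` with `u, v ∈ ℚ` and `k` a positive nonsquare integer. -/
def IsQuadIrr (s : ℝ) : Prop :=
  Irrational s ∧
    ∃ (u v : ℚ) (k : ℕ), 0 < k ∧ ¬ IsSquare k ∧ s = (u : ℝ) + (v : ℝ) * Real.sqrt k

/-- `f` coincides on `S` with the (everywhere-defined) Möbius action of a single
element of SL(2, ℤ). -/
def MobiusLikeOn (f : ℝ → ℝ) (S : Set ℝ) : Prop :=
  ∃ A : SL2Z, ∀ y ∈ S, mobiusDefinedAt A y ∧ f y = mobius A y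

/-- Membership in the group `G̃` of piecewise-`PSL₂(ℤ)` homeomorphisms of the line:
a strictly increasing bijection of `ℝ` which, off a finite set `B`, coincides on each
connected component of `ℝ ∖ B` with the Möbius action of an element of SL(2, ℤ),
and which equals an integer translation near infinity. -/
def InGTilde (f : Equiv.Perm ℝ) : Prop :=
  StrictMono f ∧
  (∃ B : Finset ℝ, ∀ x : ℝ, x ∉ B →
    MobiusLikeOn f (connectedComponentIn ((↑B : Set ℝ)ᶜ) x)) ∧
  ∃ (n : ℤ) (M : ℝ), ∀ x : ℝ, M ≤ |x| → f x = x + (n : ℝ)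

/-- `x` is a break point of `f` if `f` does not coincide with the Möbius action of a
single element of SL(2, ℤ) on any neighbourhood of `x`. -/
def IsBreakPt (f : ℝ → ℝ) (x : ℝ) : Prop :=
  ¬ ∃ U ∈ nhds x, MobiusLikeOn f U

/-- Membership in Monod's group `H(ℤ)`: an element of `G̃` all of whose break points
lie in `P_ℤ`. -/
def InHZ (f : Equiv.Perm ℝ) : Prop :=
  InGTilde f ∧ ∀ x : ℝ, IsBreakPt f x → x ∈ PZ

/-- The orbit of `s` under the Möbius action of SL(2, ℤ) (where defined). -/
def orbitOf (s : ℝ) : Set ℝ :=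
  {x | ∃ A : SL2Z, mobiusDefinedAt A s ∧ x = mobius A s}

open Set Filter Topology

namespace SL2Z

def den (A : SL2Z) (x : ℝ) : ℝ := ((A 1 0 : ℤ) : ℝ) * x + ((A 1 1 : ℤ) : ℝ)

lemma mul_apply_fin_two (A B : SL2Z) (i j : Fin 2) :
    (A * B) i j = A i 0 * B 0 j + A i 1 * B 1 j := by
  simp [Matrix.SpecialLinearGroup.coe_mul, Matrix.mul_apply, Fin.sum_univ_two]

lemma det_eq_one_real (A : SL2Z) :
    ((A 0 0 : ℤ) : ℝ) * (A 1 1 : ℤ) - ((A 0 1 : ℤ) : ℝ) * (A 1 0 : ℤ) = 1 := by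
  have h := A.2
  rw [Matrix.det_fin_two] at h
  exact_mod_cast h

end SL2Z

open SL2Z

lemma mobius_eq_div_den (A : SL2Z) (x : ℝ) :
    mobius A x = (((A 0 0 : ℤ) : ℝ) * x + ((A 0 1 : ℤ) : ℝ)) / den A x := rfl

lemma den_mul (A B : SL2Z) {x : ℝ} (hB : den B x ≠ 0) :
    den (A * B) x = den A (mobius B x) * den B x := by
  simp only [den, mobius, mul_apply_fin_two] at hB ⊢
  rw [← mul_div_assoc, div_add' _ _ _ hB, div_mul_cancel₀ _ hB]
  push_cast
  ring

lemma mobius_mul (A B : SL2Z) {x : ℝ} (hB : den B x ≠ 0) :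
    mobius (A * B) x = mobius A (mobius B x) := by
  simp only [den, mobius, mul_apply_fin_two] at hB ⊢
  rw [← mul_div_assoc, ← mul_div_assoc, div_add' _ _ _ hB, div_add' _ _ _ hB,
    div_div_div_cancel_right₀ hB]
  congr 1 <;> push_cast <;> ring

@[simp] lemma den_one (x : ℝ) : den 1 x = 1 := by simp [den]

@[simp] lemma mobius_one (x : ℝ) : mobius 1 x = x := by simp [mobius]

lemma den_inv_mobius_ne_zero (A : SL2Z) {x : ℝ} (hA : den A x ≠ 0) :
    den A⁻¹ (mobius A x) ≠ 0 := by
  have h := den_mul A⁻¹ A hA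
  rw [inv_mul_cancel, den_one] at h
  exact left_ne_zero_of_mul (h ▸ one_ne_zero)

lemma mobius_inv_mobius (A : SL2Z) {x : ℝ} (hA : den A x ≠ 0) :
    mobius A⁻¹ (mobius A x) = x := by
  rw [← mobius_mul A⁻¹ A hA, inv_mul_cancel, mobius_one]

lemma continuousAt_mobius (A : SL2Z) {x : ℝ} (hA : den A x ≠ 0) :
    ContinuousAt (mobius A) x :=
  ContinuousAt.div (by fun_prop) (by fun_prop) hA

lemma strictMonoOn_mobius (A : SL2Z) : StrictMonoOn (mobius A) {x | 0 < den A x} := by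
  intro x (hx : 0 < den A x) y (hy : 0 < den A y) hxy
  rw [mobius_eq_div_den, mobius_eq_div_den, div_lt_div_iff₀ hx hy]
  have := det_eq_one_real A
  simp only [den] at hx hy ⊢
  nlinarith

lemma den_pos_of_mem_Icc (A : SL2Z) {u v x : ℝ} (hu : 0 < den A u) (hv : 0 < den A v)
    (hx : x ∈ Icc u v) : 0 < den A x := by
  rcases hx.1.eq_or_lt with rfl | hux
  · exact hu
  have h : (v - u) * den A x = (v - x) * den A u + (x - u) * den A v := by simp only [den]; ring
  have : 0 < (v - x) * den A u + (x - u) * den A v := by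
    nlinarith [mul_nonneg (sub_nonneg.2 hx.2) hu.le]
  exact pos_of_mul_pos_right (h ▸ this) (by linarith [hx.2])

lemma isFixedPt_iff_mobius_eq {A : SL2Z} {x : ℝ} (hA : mobiusDefinedAt A x) :
    IsFixedPt A x ↔ mobius A x = x := by
  rw [mobius, div_eq_iff hA]
  exact Iff.rfl

lemma entries_eq_of_isFixedPt_Ioo {A : SL2Z} {a b : ℝ} (hab : a < b)
    (h : ∀ y ∈ Ioo a b, IsFixedPt A y) : A 1 0 = 0 ∧ A 0 1 = 0 ∧ A 0 0 = A 1 1 := by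
  obtain ⟨q, hq, hqb⟩ : ∃ q > 0, a + 3 * q < b := ⟨(b - a) / 4, by linarith, by linarith⟩
  have hq0 : q ≠ 0 := hq.ne'
  have h₁ := h (a + q) ⟨by linarith, by linarith⟩
  have h₂ := h (a + 2 * q) ⟨by linarith, by linarith⟩
  have h₃ := h (a + 3 * q) ⟨by linarith, by linarith⟩
  unfold IsFixedPt at h₁ h₂ h₃
  have hc : ((A 1 0 : ℤ) : ℝ) = 0 := by
    have : 2 * q ^ 2 * ((A 1 0 : ℤ) : ℝ) = 0 := by linear_combination -h₁ + 2 * h₂ - h₃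
    simpa [hq0] using this
  have had : ((A 0 0 : ℤ) : ℝ) = (A 1 1 : ℤ) := by
    have : q * (((A 0 0 : ℤ) : ℝ) - (A 1 1 : ℤ)) = 0 := by
      linear_combination h₂ - h₁ + (q * (2 * a + 3 * q)) * hc
    simpa [hq0, sub_eq_zero] using this
  have hb : ((A 0 1 : ℤ) : ℝ) = 0 := by
    linear_combination h₁ - (a + q) * had + (a + q) ^ 2 * hc
  exact ⟨by exact_mod_cast hc, by exact_mod_cast hb, by exact_mod_cast had⟩

lemma isFixedPt_of_isFixedPt_Ioo {A : SL2Z} {a b : ℝ} (hab : a < b)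
    (h : ∀ y ∈ Ioo a b, IsFixedPt A y) (x : ℝ) : IsFixedPt A x := by
  obtain ⟨hc, hb, had⟩ := entries_eq_of_isFixedPt_Ioo hab h
  simp only [IsFixedPt, hc, hb, had]
  push_cast
  ring

lemma IsHyperbolic.entry_one_zero_ne_zero {A : SL2Z} (hA : IsHyperbolic A) : A 1 0 ≠ 0 := by
  intro hc
  have hdet := A.2
  rw [Matrix.det_fin_two, hc, mul_zero, sub_zero] at hdet
  unfold IsHyperbolic at hA
  rcases Int.mul_eq_one_iff_eq_one_or_neg_one.1 hdet with ⟨h1, h2⟩ | ⟨h1, h2⟩ <;>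
    simp [h1, h2] at hA

lemma IsHyperbolic.not_forall_isFixedPt_Ioo {A : SL2Z} (hA : IsHyperbolic A) {a b : ℝ}
    (hab : a < b) : ¬ ∀ y ∈ Ioo a b, IsFixedPt A y := fun h =>
  hA.entry_one_zero_ne_zero (entries_eq_of_isFixedPt_Ioo hab h).1

lemma mobiusLikeOn_of_forall_eq_self {f : ℝ → ℝ} {S : Set ℝ} (h : ∀ y ∈ S, f y = y) :
    MobiusLikeOn f S :=
  ⟨1, fun y hy => ⟨by simp [mobiusDefinedAt], by rw [h y hy, mobius_one]⟩⟩

lemma isBreakPt_of_isHyperbolic {f : ℝ → ℝ} {A : SL2Z} (hA : IsHyperbolic A) {u v w : ℝ}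
    (huv : u < v) (hvw : v < w) (hleft : ∀ y ∈ Ioo u v, mobiusDefinedAt A y ∧ f y = mobius A y)
    (hright : ∀ y ∈ Ioo v w, f y = y) : IsBreakPt f v := by
  rintro ⟨U, hU, C, hC⟩
  obtain ⟨l, r, ⟨hlv, hvr⟩, hlr⟩ := mem_nhds_iff_exists_Ioo_subset.1 hU
  -- `C` fixes the points to the right of `v`, hence all points, so `A` fixes those to the left
  have hCfix : ∀ y, IsFixedPt C y := by
    refine isFixedPt_of_isFixedPt_Ioo (lt_min hvw hvr) fun y hy => ?_
    obtain ⟨hCy, hfy⟩ := hC y (hlr ⟨hlv.trans hy.1, hy.2.trans_le (min_le_right _ _)⟩)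
    rw [isFixedPt_iff_mobius_eq hCy, ← hfy, hright y ⟨hy.1, hy.2.trans_le (min_le_left _ _)⟩]
  refine hA.not_forall_isFixedPt_Ioo (max_lt huv hlv) fun y hy => ?_
  obtain ⟨hAy, hfy⟩ := hleft y ⟨(le_max_left _ _).trans_lt hy.1, hy.2⟩
  obtain ⟨hCy, hfy'⟩ := hC y (hlr ⟨(le_max_right _ _).trans_lt hy.1, hy.2.trans hvr⟩)
  rw [isFixedPt_iff_mobius_eq hAy, ← hfy, hfy', ← isFixedPt_iff_mobius_eq hCy]
  exact hCfix y

def breakPts (f : ℝ → ℝ) : Set ℝ := {x | IsBreakPt f x}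

lemma not_isBreakPt_comp {f g : ℝ → ℝ} {x : ℝ} (hg : ¬IsBreakPt g x)
    (hf : ¬IsBreakPt f (g x)) : ¬IsBreakPt (f ∘ g) x := by
  simp only [IsBreakPt, not_not] at *
  obtain ⟨U, hU, B, hB⟩ := hg
  obtain ⟨U', hU', A, hA⟩ := hf
  obtain ⟨hBx, hgx⟩ := hB x (mem_of_mem_nhds hU)
  rw [hgx] at hU'
  refine ⟨U ∩ mobius B ⁻¹' U',
    inter_mem hU ((continuousAt_mobius B hBx).preimage_mem_nhds hU'), A * B, ?_⟩
  rintro y ⟨hyU, hyU'⟩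
  obtain ⟨hBy, hgy⟩ := hB y hyU
  obtain ⟨hAy, hfy⟩ := hA _ hyU'
  refine ⟨?_, ?_⟩
  · change den (A * B) y ≠ 0
    rw [den_mul A B hBy]
    exact mul_ne_zero hAy hBy
  · rw [Function.comp_apply, hgy, hfy, mobius_mul A B hBy]

lemma not_isBreakPt_symm {g : Equiv.Perm ℝ} (hg : StrictMono g) {x : ℝ}
    (hx : ¬IsBreakPt g x) : ¬IsBreakPt g.symm (g x) := by
  simp only [IsBreakPt, not_not] at *
  obtain ⟨U, hU, A, hA⟩ := hx
  refine ⟨g '' U,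
    (hg.orderIsoOfSurjective g g.surjective).toHomeomorph.isOpenMap.image_mem_nhds hU, A⁻¹, ?_⟩
  rintro _ ⟨y, hy, rfl⟩
  obtain ⟨hAy, hgy⟩ := hA y hy
  rw [Equiv.symm_apply_apply, hgy]
  exact ⟨den_inv_mobius_ne_zero A hAy, (mobius_inv_mobius A hAy).symm⟩

lemma breakPts_subset_of_mobiusLikeOn_connectedComponentIn {g : ℝ → ℝ} {B : Finset ℝ}
    (hB : ∀ x ∉ B, MobiusLikeOn g (connectedComponentIn (↑B : Set ℝ)ᶜ x)) :
    breakPts g ⊆ B := by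
  intro x hx
  by_contra hxB
  have hopen : IsOpen (connectedComponentIn (↑B : Set ℝ)ᶜ x) :=
    B.finite_toSet.isClosed.isOpen_compl.connectedComponentIn
  exact hx ⟨_, hopen.mem_nhds (mem_connectedComponentIn hxB), hB x hxB⟩

lemma InGTilde.breakPts_finite {g : Equiv.Perm ℝ} (hg : InGTilde g) : (breakPts g).Finite :=
  let ⟨_, ⟨B, hB⟩, _⟩ := hg
  B.finite_toSet.subset (breakPts_subset_of_mobiusLikeOn_connectedComponentIn hB)

lemma InGTilde.exists_mobius_eq {g : Equiv.Perm ℝ} (hg : InGTilde g) (z : ℝ) :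
    ∃ A : SL2Z, mobiusDefinedAt A z ∧ g z = mobius A z := by
  obtain ⟨hmono, ⟨B, hB⟩, -⟩ := hg
  have hcont : Continuous g := (hmono.orderIsoOfSurjective g g.surjective).continuous
  obtain ⟨l, r, ⟨hlz, hzr⟩, hlr⟩ := mem_nhds_iff_exists_Ioo_subset.1
    ((B.finite_toSet.sdiff (t := {z})).isClosed.isOpen_compl.mem_nhds fun h => h.2 rfl)
  have hIoo : Ioo z r ⊆ (↑B : Set ℝ)ᶜ := fun y hy hyB =>
    hlr ⟨hlz.trans hy.1, hy.2⟩ ⟨hyB, hy.1.ne'⟩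
  have hw : (z + r) / 2 ∈ Ioo z r := ⟨by linarith, by linarith⟩
  obtain ⟨A, hA⟩ := hB _ (hIoo hw)
  have hsub := isPreconnected_Ioo.subset_connectedComponentIn hw hIoo
  -- `g` is continuous, so the identity `g y * den A y = a y + b` valid on `(z, r)` extends to `z`
  have key : g z * den A z = ((A 0 0 : ℤ) : ℝ) * z + (A 0 1 : ℤ) := by
    have hcl : IsClosed {y | g y * den A y = ((A 0 0 : ℤ) : ℝ) * y + (A 0 1 : ℤ)} :=
      isClosed_eq (by unfold den; fun_prop) (by fun_prop)
    refine closure_minimal (fun y hy => ?_) hcl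
      (by rw [closure_Ioo hzr.ne]; exact left_mem_Icc.2 hzr.le)
    obtain ⟨hAy, hgy⟩ := hA y (hsub hy)
    change g y * den A y = _
    rw [hgy, mobius_eq_div_den, div_mul_cancel₀ _ (show den A y ≠ 0 from hAy)]
  have hden : den A z ≠ 0 := by
    intro h0
    have hnum : ((A 0 0 : ℤ) : ℝ) * z + (A 0 1 : ℤ) = 0 := by rw [← key, h0, mul_zero]
    unfold den at h0
    exact one_ne_zero (by
      linear_combination ((A 0 0 : ℤ) : ℝ) * h0 - ((A 1 0 : ℤ) : ℝ) * hnum - det_eq_one_real A :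
        (1 : ℝ) = 0)
  exact ⟨A, hden, by rw [mobius_eq_div_den, eq_div_iff hden, key]⟩

def IsMobiusInvariant (V : Set ℝ) : Prop :=
  ∀ (A : SL2Z) (x : ℝ), mobiusDefinedAt A x → x ∈ V → mobius A x ∈ V

lemma IsMobiusInvariant.mobius_mem_iff {V : Set ℝ} (hV : IsMobiusInvariant V) {A : SL2Z}
    {x : ℝ} (hA : mobiusDefinedAt A x) : mobius A x ∈ V ↔ x ∈ V :=
  ⟨fun h => mobius_inv_mobius A hA ▸ hV A⁻¹ _ (den_inv_mobius_ne_zero A hA) h, hV A x hA⟩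

lemma isMobiusInvariant_subfield (K : Subfield ℝ) : IsMobiusInvariant K := fun _ _ _ hx =>
  K.div_mem (K.add_mem (K.mul_mem (intCast_mem K _) hx) (intCast_mem K _))
    (K.add_mem (K.mul_mem (intCast_mem K _) hx) (intCast_mem K _))

lemma isMobiusInvariant_iUnion {ι : Sort*} {V : ι → Set ℝ} (h : ∀ i, IsMobiusInvariant (V i)) :
    IsMobiusInvariant (⋃ i, V i) := fun A x hA hx =>
  let ⟨i, hi⟩ := mem_iUnion.1 hx
  mem_iUnion.2 ⟨i, h i A x hA hi⟩

lemma breakPts_mul_subset {V : Set ℝ} (hV : IsMobiusInvariant V) {f g : Equiv.Perm ℝ}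
    (hf : breakPts f ⊆ V) (hg : breakPts g ⊆ V) : breakPts ⇑(f * g) ⊆ V := by
  intro x hx
  by_contra hxV
  have hgx : ¬IsBreakPt g x := fun h => hxV (hg h)
  obtain ⟨U, hU, B, hB⟩ := not_not.1 hgx
  obtain ⟨hBx, hgx'⟩ := hB x (mem_of_mem_nhds hU)
  have hfgx : ¬IsBreakPt f (g x) := fun h => hxV ((hV.mobius_mem_iff hBx).1 (hgx' ▸ hf h))
  exact not_isBreakPt_comp hgx hfgx hx

lemma InGTilde.breakPts_inv_subset {V : Set ℝ} (hV : IsMobiusInvariant V) {g : Equiv.Perm ℝ}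
    (hg : InGTilde g) (hgV : breakPts g ⊆ V) : breakPts ⇑g⁻¹ ⊆ V := by
  intro y hy
  obtain ⟨x, rfl⟩ := g.surjective y
  by_cases hx : IsBreakPt g x
  · obtain ⟨A, hA, hgx⟩ := hg.exists_mobius_eq x
    rw [hgx]
    exact hV A x hA (hgV hx)
  · exact absurd hy (not_isBreakPt_symm hg.1 hx)

def breakPtsSubgroup {V : Set ℝ} (hV : IsMobiusInvariant V) : Subgroup (Equiv.Perm ℝ) where
  carrier := {g | breakPts g ⊆ V ∧ breakPts ⇑g⁻¹ ⊆ V}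
  mul_mem' hf hg := ⟨breakPts_mul_subset hV hf.1 hg.1,
    by rw [mul_inv_rev]; exact breakPts_mul_subset hV hg.2 hf.2⟩
  one_mem' := by
    have h (x : ℝ) : ¬IsBreakPt id x := fun hx =>
      hx ⟨univ, univ_mem, mobiusLikeOn_of_forall_eq_self fun _ _ => rfl⟩
    exact ⟨fun x hx => (h x hx).elim, fun x hx => (h x hx).elim⟩
  inv_mem' hg := ⟨hg.2, by rw [inv_inv]; exact hg.1⟩

lemma connectedComponentIn_compl_subset_Ioi {α : Type*} [LinearOrder α] [TopologicalSpace α]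
    [OrderClosedTopology α] {B : Set α} {a x : α} (ha : a ∈ B) (hax : a < x) :
    connectedComponentIn Bᶜ x ⊆ Ioi a := by
  intro y hy
  by_contra hya
  have hx : x ∈ Bᶜ := connectedComponentIn_nonempty_iff.1 ⟨y, hy⟩
  exact connectedComponentIn_subset _ _ (isPreconnected_connectedComponentIn.Icc_subset hy
    (mem_connectedComponentIn hx) ⟨not_lt.1 hya, hax.le⟩) ha

lemma connectedComponentIn_compl_subset_Iio {α : Type*} [LinearOrder α] [TopologicalSpace α]
    [OrderClosedTopology α] {B : Set α} {b x : α} (hb : b ∈ B) (hxb : x < b) :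
    connectedComponentIn Bᶜ x ⊆ Iio b := by
  intro y hy
  by_contra hyb
  have hx : x ∈ Bᶜ := connectedComponentIn_nonempty_iff.1 ⟨y, hy⟩
  exact connectedComponentIn_subset _ _ (isPreconnected_connectedComponentIn.Icc_subset
    (mem_connectedComponentIn hx) hy ⟨hxb.le, not_lt.1 hyb⟩) hb

lemma isFixedPt_inv_and_den_pos {A : SL2Z} {u : ℝ} (hu : IsFixedPt A u) (hdu : 0 < den A u) :
    IsFixedPt A⁻¹ u ∧ 0 < den A⁻¹ u := by
  have hmu : mobius A u = u := (isFixedPt_iff_mobius_eq hdu.ne').1 hu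
  have hprod := den_mul A⁻¹ A hdu.ne'
  rw [inv_mul_cancel, den_one, hmu] at hprod
  have hdu' : 0 < den A⁻¹ u := pos_of_mul_pos_left (hprod ▸ one_pos) hdu.le
  have hinv := mobius_inv_mobius A hdu.ne'
  rw [hmu] at hinv
  exact ⟨(isFixedPt_iff_mobius_eq hdu'.ne').2 hinv, hdu'⟩

lemma mapsTo_mobius_Icc {A : SL2Z} {u v : ℝ} (hu : IsFixedPt A u) (hv : IsFixedPt A v)
    (hdu : 0 < den A u) (hdv : 0 < den A v) : MapsTo (mobius A) (Icc u v) (Icc u v) := by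
  intro x hx
  have hmono := (strictMonoOn_mobius A).monotoneOn
  have hdx : 0 < den A x := den_pos_of_mem_Icc A hdu hdv hx
  rw [isFixedPt_iff_mobius_eq hdu.ne'] at hu
  rw [isFixedPt_iff_mobius_eq hdv.ne'] at hv
  exact ⟨hu ▸ hmono hdu hdx hx.1, hv ▸ hmono hdx hdv hx.2⟩

lemma strictMono_of_eq_mobius_on_Icc {f : ℝ → ℝ} {A : SL2Z} {u v : ℝ} (huv : u ≤ v)
    (hdu : 0 < den A u) (hdv : 0 < den A v) (hin : ∀ x ∈ Icc u v, f x = mobius A x)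
    (hout : ∀ x ∉ Ioo u v, f x = x) : StrictMono f := by
  have hIic : StrictMonoOn f (Iic u) := fun x hx y hy hxy => by
    rwa [hout x fun h => not_lt.2 hx h.1, hout y fun h => not_lt.2 hy h.1]
  have hIcc : StrictMonoOn f (Icc u v) := fun x hx y hy hxy => by
    rw [hin x hx, hin y hy]
    exact strictMonoOn_mobius A (den_pos_of_mem_Icc A hdu hdv hx)
      (den_pos_of_mem_Icc A hdu hdv hy) hxy
  have hIci : StrictMonoOn f (Ici v) := fun x hx y hy hxy => by
    rwa [hout x fun h => not_lt.2 hx h.2, hout y fun h => not_lt.2 hy h.2]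
  have hIicv : StrictMonoOn f (Iic v) :=
    Iic_union_Icc_eq_Iic huv ▸ hIic.union hIcc isGreatest_Iic (isLeast_Icc huv)
  exact hIicv.Iic_union_Ici hIci

lemma exists_perm_eq_mobius_on_Icc {A : SL2Z} {u v : ℝ} (huv : u < v) (hu : IsFixedPt A u)
    (hv : IsFixedPt A v) (hdu : 0 < den A u) (hdv : 0 < den A v) :
    ∃ f : Equiv.Perm ℝ, StrictMono f ∧ (∀ x ∈ Icc u v, f x = mobius A x) ∧
      ∀ x ∉ Ioo u v, f x = x := by
  classical
  obtain ⟨hu', hdu'⟩ := isFixedPt_inv_and_den_pos hu hdu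
  obtain ⟨hv', hdv'⟩ := isFixedPt_inv_and_den_pos hv hdv
  have hmaps := mapsTo_mobius_Icc hu hv hdu hdv
  have hmaps' := mapsTo_mobius_Icc hu' hv' hdu' hdv'
  let f : Equiv.Perm ℝ :=
    { toFun x := if x ∈ Icc u v then mobius A x else x
      invFun x := if x ∈ Icc u v then mobius A⁻¹ x else x
      left_inv x := by
        by_cases hx : x ∈ Icc u v
        · simp only [if_pos hx, if_pos (hmaps hx)]
          exact mobius_inv_mobius A (den_pos_of_mem_Icc A hdu hdv hx).ne'
        · simp only [if_neg hx]
      right_inv x := by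
        by_cases hx : x ∈ Icc u v
        · simp only [if_pos hx, if_pos (hmaps' hx)]
          simpa using mobius_inv_mobius A⁻¹ (den_pos_of_mem_Icc A⁻¹ hdu' hdv' hx).ne'
        · simp only [if_neg hx] }
  have hin (x : ℝ) (hx : x ∈ Icc u v) : f x = mobius A x := if_pos hx
  have hout (x : ℝ) (hx : x ∉ Ioo u v) : f x = x := by
    by_cases hx' : x ∈ Icc u v
    · have hmu : mobius A u = u := (isFixedPt_iff_mobius_eq hdu.ne').1 hu
      have hmv : mobius A v = v := (isFixedPt_iff_mobius_eq hdv.ne').1 hv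
      have hx'' : x ∈ ({u, v} : Set ℝ) := Icc_sdiff_Ioo_same huv.le ▸ ⟨hx', hx⟩
      rcases hx'' with rfl | rfl
      · rw [hin _ hx', hmu]
      · rw [hin _ hx', hmv]
    · exact if_neg hx'
  exact ⟨f, strictMono_of_eq_mobius_on_Icc huv.le hdu hdv hin hout, hin, hout⟩

lemma exists_inHZ_isBreakPt {A : SL2Z} (hA : IsHyperbolic A) {u v : ℝ} (huv : u < v)
    (hu : IsFixedPt A u) (hv : IsFixedPt A v) (hdu : 0 < den A u) (hdv : 0 < den A v) :
    ∃ f : Equiv.Perm ℝ, InHZ f ∧ IsBreakPt f v := by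
  obtain ⟨f, hmono, hin, hout⟩ := exists_perm_eq_mobius_on_Icc huv hu hv hdu hdv
  have hmid : ∀ y ∈ Ioo u v, mobiusDefinedAt A y ∧ f y = mobius A y := fun y hy =>
    ⟨(den_pos_of_mem_Icc A hdu hdv (Ioo_subset_Icc_self hy)).ne', hin y (Ioo_subset_Icc_self hy)⟩
  have hpieces : ∀ x ∉ ({u, v} : Finset ℝ),
      MobiusLikeOn f (connectedComponentIn (↑({u, v} : Finset ℝ) : Set ℝ)ᶜ x) := by
    intro x hx
    have hu' : u ∈ (↑({u, v} : Finset ℝ) : Set ℝ) := by simp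
    have hv' : v ∈ (↑({u, v} : Finset ℝ) : Set ℝ) := by simp
    simp only [Finset.mem_insert, Finset.mem_singleton, not_or] at hx
    rcases lt_or_gt_of_ne hx.1 with hxu | hux
    · exact mobiusLikeOn_of_forall_eq_self fun y hy =>
        hout y fun h => (connectedComponentIn_compl_subset_Iio hu' hxu hy).not_gt h.1
    rcases lt_or_gt_of_ne hx.2 with hxv | hvx
    · exact ⟨A, fun y hy => hmid y ⟨connectedComponentIn_compl_subset_Ioi hu' hux hy,
        connectedComponentIn_compl_subset_Iio hv' hxv hy⟩⟩
    · exact mobiusLikeOn_of_forall_eq_self fun y hy =>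
        hout y fun h => (connectedComponentIn_compl_subset_Ioi hv' hvx hy).not_gt h.2
  have htrans : ∀ x : ℝ, |u| + |v| + 1 ≤ |x| → f x = x + ((0 : ℤ) : ℝ) := fun x hx => by
    rw [Int.cast_zero, add_zero]
    refine hout x fun h => ?_
    have := abs_le_max_abs_abs h.1.le h.2.le
    linarith [max_le_add_of_nonneg (abs_nonneg u) (abs_nonneg v)]
  refine ⟨f, ⟨⟨hmono, ⟨_, hpieces⟩, 0, _, htrans⟩, fun x hx => ?_⟩,
    isBreakPt_of_isHyperbolic hA huv (lt_add_one v) hmid fun y hy => hout y fun h => h.2.not_gt hy.1⟩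
  have hx' := breakPts_subset_of_mobiusLikeOn_connectedComponentIn hpieces hx
  simp only [Finset.coe_insert, Finset.coe_singleton, mem_insert_iff, mem_singleton_iff] at hx'
  rcases hx' with rfl | rfl
  exacts [⟨A, hA, hu⟩, ⟨A, hA, hv⟩]

lemma exists_isHyperbolic_isFixedPt_sqrt {p : ℕ} (hp : ¬IsSquare p) :
    ∃ A : SL2Z, IsHyperbolic A ∧ IsFixedPt A (-√p) ∧ IsFixedPt A √p ∧
      0 < den A (-√p) ∧ 0 < den A √p := by
  have hp0 : 0 < p := Nat.pos_of_ne_zero fun h => hp (h ▸ ⟨0, rfl⟩)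
  obtain ⟨x, y, hxy, hy⟩ := Pell.exists_of_not_isSquare (d := (p : ℤ)) (by exact_mod_cast hp0)
    (by rwa [Int.isSquare_natCast_iff])
  -- multiplication by the unit `|x| + y √p` of `ℤ[√p]`, whose fixed points are `±√p`
  let A : SL2Z := ⟨!![|x|, y * p; y, |x|], by
    rw [Matrix.det_fin_two_of]; linear_combination (sq_abs x) + hxy⟩
  obtain ⟨e₀₀, e₀₁, e₁₀, e₁₁⟩ : A 0 0 = |x| ∧ A 0 1 = y * p ∧ A 1 0 = y ∧ A 1 1 = |x| :=
    ⟨rfl, rfl, rfl, rfl⟩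
  have hx2 : 2 ≤ |x| := by
    have hp1 : (1 : ℤ) ≤ p := by exact_mod_cast hp0
    nlinarith [sq_abs x, sq_abs y, Int.one_le_abs hy, abs_nonneg x]
  have hs2 : √(p : ℝ) ^ 2 = p := Real.sq_sqrt (Nat.cast_nonneg p)
  have hxyR : |(x : ℝ)| ^ 2 - p * (y : ℝ) ^ 2 = 1 := by rw [sq_abs]; exact_mod_cast hxy
  have hfix (s : ℝ) (hs : s ^ 2 = p) : IsFixedPt A s := by
    simp only [IsFixedPt, e₀₀, e₀₁, e₁₀, e₁₁]
    push_cast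
    linear_combination (-(y : ℝ)) * hs
  -- `den A (±√p) = |x| ± y √p`: their product is `1` and their sum `2|x|` is positive
  have hprod : den A √p * den A (-√p) = 1 := by
    simp only [den, e₁₀, e₁₁]
    push_cast
    linear_combination hxyR - (y : ℝ) ^ 2 * hs2
  have hsum : den A √p + den A (-√p) = 2 * |(x : ℝ)| := by
    simp only [den, e₁₀, e₁₁]
    push_cast
    ring
  have hxR : (2 : ℝ) ≤ |(x : ℝ)| := by exact_mod_cast hx2
  refine ⟨A, ?_, hfix _ (by rw [neg_sq, hs2]), hfix _ hs2, by nlinarith, by nlinarith⟩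
  rw [IsHyperbolic, e₀₀, e₁₁, abs_of_nonneg (by positivity)]
  linarith

lemma not_isSquare_sq_sub_four {t : ℕ} (ht : 3 ≤ t) : ¬IsSquare (t ^ 2 - 4) := by
  rintro ⟨r, hr⟩
  obtain ⟨k, rfl⟩ := Nat.exists_eq_add_of_le ht
  have hk : (3 + k) ^ 2 - 4 = k * k + 6 * k + 5 := by
    rw [show (3 + k) ^ 2 = k * k + 6 * k + 5 + 4 by ring, Nat.add_sub_cancel]
  -- `(t - 1)² < t² - 4 < t²`
  refine Nat.not_exists_sq (m := k + 2) ?_ ?_ ⟨r, hr.symm⟩ <;> rw [hk] <;> nlinarith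

lemma mem_closure_sqrt_of_mem_PZ {x : ℝ} (hx : x ∈ PZ) :
    ∃ m : ℕ, ¬IsSquare m ∧ x ∈ Subfield.closure {√(m : ℝ)} := by
  obtain ⟨A, hA, hfix⟩ := hx
  set t := (A 0 0 + A 1 1).natAbs
  have ht : 3 ≤ t := by
    have : (t : ℤ) = |A 0 0 + A 1 1| := Int.natCast_natAbs _
    unfold IsHyperbolic at hA
    omega
  refine ⟨t ^ 2 - 4, not_isSquare_sq_sub_four ht, ?_⟩
  set K := Subfield.closure {√((t ^ 2 - 4 : ℕ) : ℝ)}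
  -- completing the square in the fixed-point equation `c x² + (d - a) x - b = 0`
  have hsq : (2 * ((A 1 0 : ℤ) : ℝ) * x + ((A 1 1 : ℤ) - (A 0 0 : ℤ))) ^ 2 =
      √((t ^ 2 - 4 : ℕ) : ℝ) ^ 2 := by
    have ht4 : 4 ≤ t ^ 2 := by nlinarith
    rw [Real.sq_sqrt (Nat.cast_nonneg _), Nat.cast_sub ht4, Nat.cast_pow, Nat.cast_natAbs,
      Int.cast_abs, sq_abs]
    unfold IsFixedPt at hfix
    push_cast
    linear_combination -4 * ((A 1 0 : ℤ) : ℝ) * hfix - 4 * det_eq_one_real A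
  have hy : 2 * ((A 1 0 : ℤ) : ℝ) * x + ((A 1 1 : ℤ) - (A 0 0 : ℤ)) ∈ K := by
    have hs : √((t ^ 2 - 4 : ℕ) : ℝ) ∈ K := Subfield.subset_closure rfl
    rcases sq_eq_sq_iff_eq_or_eq_neg.1 hsq with h | h <;> rw [h]
    exacts [hs, K.neg_mem hs]
  have hx : x = (2 * ((A 1 0 : ℤ) : ℝ) * x + ((A 1 1 : ℤ) - (A 0 0 : ℤ)) -
      ((A 1 1 : ℤ) - (A 0 0 : ℤ))) / (2 * ((A 1 0 : ℤ) : ℝ)) := by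
    field_simp [show ((A 1 0 : ℤ) : ℝ) ≠ 0 by exact_mod_cast hA.entry_one_zero_ne_zero]
    ring
  rw [hx]
  exact K.div_mem (K.sub_mem hy (K.sub_mem (intCast_mem K _) (intCast_mem K _)))
    (K.mul_mem (ofNat_mem K 2) (intCast_mem K _))

lemma not_isSquare_prime_mul {p m : ℕ} (hp : p.Prime) (hm : 0 < m) (hmp : m < p) :
    ¬IsSquare (p * m) := by
  rintro ⟨r, hr⟩
  obtain ⟨k, rfl⟩ : p ∣ r := hp.dvd_of_dvd_pow (n := 2) ⟨m, by rw [sq, ← hr]⟩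
  have hmk : m = p * (k * k) := Nat.eq_of_mul_eq_mul_left hp.pos (by rw [hr]; ring)
  exact absurd (Nat.le_of_dvd hm ⟨k * k, hmk⟩) (not_le.2 hmp)

lemma sqrt_notMem_closure_sqrt {p m : ℕ} (hp : p.Prime) (hm : ¬IsSquare m) (hmp : m < p) :
    √(p : ℝ) ∉ Subfield.closure {√(m : ℝ)} := by
  have : Fact (∀ r : ℚ, r ^ 2 ≠ m + 0 * r) :=
    ⟨fun r hr => hm (Rat.isSquare_natCast_iff.1 ⟨r, by rw [← sq, hr, zero_mul, add_zero]⟩)⟩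
  have hs2 (n : ℕ) : √(n : ℝ) ^ 2 = n := Real.sq_sqrt (Nat.cast_nonneg n)
  -- `ℚ(√m)` is the image of the field `ℚ[X]/(X² - m)`, so its elements are `u + v √m`
  let ι : QuadraticAlgebra ℚ m 0 →ₐ[ℚ] ℝ :=
    QuadraticAlgebra.lift ⟨√(m : ℝ), by rw [← sq, hs2]; simp⟩
  intro h
  obtain ⟨z, hz⟩ := Subfield.closure_le (t := ι.fieldRange.toSubfield).2
    (singleton_subset_iff.2 ⟨⟨0, 1⟩, by simp [ι]⟩) h
  simp only [ι, AlgHom.toRingHom_eq_coe, RingHom.coe_coe, QuadraticAlgebra.lift_apply_apply,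
    Rat.smul_def, mul_one] at hz
  have hmirr : Irrational √(m : ℝ) := irrational_sqrt_natCast_iff.2 hm
  have hsq : (p : ℝ) = ((z.re ^ 2 + z.im ^ 2 * m : ℚ) : ℝ) + ((2 * z.re * z.im : ℚ) : ℝ) * √m := by
    rw [← hs2 p, ← hz]
    push_cast
    linear_combination ((z.im : ℝ) ^ 2) * hs2 m
  have hreim : z.re * z.im = 0 := by
    by_contra hne
    have h2 : (2 * z.re * z.im : ℚ) ≠ 0 := by rw [mul_assoc]; exact mul_ne_zero two_ne_zero hne
    exact ((hmirr.ratCast_mul h2).ratCast_add (z.re ^ 2 + z.im ^ 2 * m)).ne_nat p hsq.symm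
  rcases mul_eq_zero.1 hreim with hre | him
  · have hp' : (p : ℚ) = z.im ^ 2 * m := by
      have : (p : ℝ) = ((z.im ^ 2 * m : ℚ) : ℝ) := by simpa [hre] using hsq
      exact_mod_cast this
    have hpm : ((p * m : ℕ) : ℚ) = (z.im * m) ^ 2 := by push_cast; rw [hp']; ring
    exact not_isSquare_prime_mul hp (Nat.pos_of_ne_zero (by rintro rfl; exact hm ⟨0, rfl⟩)) hmp
      (Rat.isSquare_natCast_iff.1 ⟨_, hpm.trans (sq _)⟩)
  · simp only [him, Rat.cast_zero, zero_mul, add_zero] at hz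
    exact hp.irrational_sqrt ⟨z.re, by simpa using hz⟩

lemma exists_prime_sqrt_notMem_closure {T : Set ℝ} (hT : T.Finite) (hTP : T ⊆ PZ) :
    ∃ p : ℕ, p.Prime ∧ ∀ t ∈ T, √(p : ℝ) ∉ Subfield.closure {t} := by
  have : ∀ᶠ p : ℕ in atTop, ∀ t ∈ T, p.Prime → √(p : ℝ) ∉ Subfield.closure {t} := by
    refine (eventually_all_finite hT).2 fun t ht => ?_
    obtain ⟨m, hm, htm⟩ := mem_closure_sqrt_of_mem_PZ (hTP ht)
    filter_upwards [eventually_gt_atTop m] with p hmp hp hpt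
    exact sqrt_notMem_closure_sqrt hp hm hmp
      (Subfield.closure_le.2 (singleton_subset_iff.2 htm) hpt)
  obtain ⟨N, hN⟩ := eventually_atTop.1 this
  obtain ⟨p, hNp, hp⟩ := Nat.exists_infinite_primes N
  exact ⟨p, hp, fun t ht => hN p hNp t ht hp⟩

/-- The group `H(ℤ)` is not finitely generated: no finite subset of `H(ℤ)` generates a
subgroup (of the permutation group of `ℝ`) containing all of `H(ℤ)`. -/
theorem HZ_not_finitely_generated :
    ¬ ∃ S : Finset (Equiv.Perm ℝ), (∀ g ∈ S, InHZ g) ∧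
      ∀ f : Equiv.Perm ℝ, InHZ f → f ∈ Subgroup.closure (↑S : Set (Equiv.Perm ℝ)) := by
  rintro ⟨S, hS, hgen⟩
  set T := ⋃ g ∈ S, breakPts g
  have hTfin : T.Finite := S.finite_toSet.biUnion fun g hg => (hS g hg).1.breakPts_finite
  have hTPZ : T ⊆ PZ := iUnion₂_subset fun g hg => (hS g hg).2
  obtain ⟨p, hp, hpT⟩ := exists_prime_sqrt_notMem_closure hTfin hTPZ
  set V := ⋃ t ∈ T, (Subfield.closure {t} : Set ℝ)
  have hV : IsMobiusInvariant V :=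
    isMobiusInvariant_iUnion fun _ => isMobiusInvariant_iUnion fun _ => isMobiusInvariant_subfield _
  have hSV : ∀ g ∈ S, breakPts g ⊆ V := fun g hg x hx =>
    mem_biUnion (mem_biUnion hg hx) (Subfield.subset_closure rfl)
  have hclosure : Subgroup.closure (↑S : Set (Equiv.Perm ℝ)) ≤ breakPtsSubgroup hV :=
    (Subgroup.closure_le _).2 fun g hg =>
      ⟨hSV g hg, (hS g hg).1.breakPts_inv_subset hV (hSV g hg)⟩
  obtain ⟨A, hA, hfix₁, hfix₂, hden₁, hden₂⟩ := exists_isHyperbolic_isFixedPt_sqrt hp.not_isSquare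
  obtain ⟨f, hf, hfp⟩ := exists_inHZ_isBreakPt hA (by simpa using hp.pos) hfix₁ hfix₂ hden₁ hden₂
  obtain ⟨t, ht, hpt⟩ := mem_iUnion₂.1 ((hclosure (hgen f hf)).1 hfp)
  exact hpT t ht hpt

end
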